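/- arXiv:1309.1987 — 3 statements merged into one kernel-verified Lean document; each statement's English description precedes it below -/
import Mathlib

section
/- For every positive integer N, the set {1, 2, ..., N} can be partitioned into an initial segment A equal to {1}, {1,2}, or {1,2,3}, together with, for each i from 2 to r, b_i ∈ {1,2} intervals of consecutive integers of the form {R, R+1, ..., R+F_i-1} with R ≥ F_i, where r ≤ 1 + log_φ N. -/
/-- Fibonacci numbers with `F 0 = F 1 = 1`. -/
def F (i : ℕ) : ℕ := Nat.fib (i + 1)

noncomputable def phi : ℝ := (1 + Real.sqrt 5) / 2

/-!
For fixed `r ≥ 1`, the sums `s + ∑_{i=2}^r b_i F_i` with `s ∈ {1,2,3}` and `b_i ∈ {1,2}` take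
every value `N` with `fib (r+3) ≤ N + 2 < fib (r+4)`: adding `F_{r+1}` or `2 F_{r+1}` to the
range of level `r` covers the range of level `r + 1`. Laying the blocks out
in increasing order of `i` after `{1, …, s}`, the blocks of level `i` start beyond
`s + ∑_{k<i} F_k ≥ F_i - 1`. Finally `F_r ≤ N` and `φ^(r-1) ≤ F_r` bound `r`.
-/

open Real
open scoped goldenRatio

lemma goldenRatio_pow_le_fib_add_two (n : ℕ) : φ ^ n ≤ Nat.fib (n + 2) := by
  have hpow := goldenRatio_mul_fib_succ_add_fib n
  have hfib : (Nat.fib n : ℝ) ≤ φ * Nat.fib n :=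
    le_mul_of_one_le_left (Nat.cast_nonneg _) one_lt_goldenRatio.le
  refine le_of_mul_le_mul_left ?_ goldenRatio_pos
  rw [← pow_succ', Nat.fib_add_two, Nat.cast_add]
  linarith

lemma exists_fib_le_lt_fib_succ {m n : ℕ} (h : Nat.fib m ≤ n) :
    ∃ k, m ≤ k ∧ Nat.fib k ≤ n ∧ n < Nat.fib (k + 1) := by
  have hex : ∃ j, n < Nat.fib (m + j + 1) :=
    ⟨n + 1, by linarith [Nat.le_fib_add_one (m + (n + 1) + 1)]⟩
  refine ⟨m + Nat.find hex, by omega, ?_, Nat.find_spec hex⟩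
  rcases hj : Nat.find hex with _ | j
  · simpa using h
  · simpa [← add_assoc] using Nat.find_min hex (hj ▸ j.lt_succ_self)

lemma natCast_le_one_add_logb_of_fib_le {r N : ℕ} (hr : 1 ≤ r) (h : Nat.fib (r + 3) ≤ N + 2) :
    (r : ℝ) ≤ 1 + logb φ N := by
  obtain ⟨k, rfl⟩ := Nat.exists_eq_add_of_le' hr
  have hrec : Nat.fib (k + 1 + 3) = Nat.fib (k + 2) + Nat.fib (k + 3) := Nat.fib_add_two
  have htwo : 2 ≤ Nat.fib (k + 3) := Nat.fib_mono (show 3 ≤ k + 3 by omega)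
  have hpos : 0 < Nat.fib (k + 2) := Nat.fib_pos.2 (by omega)
  have hfib : Nat.fib (k + 2) ≤ N := by omega
  have hN : (0 : ℝ) < N := by exact_mod_cast hpos.trans_le hfib
  have hk : (k : ℝ) ≤ logb φ N := by
    rw [le_logb_iff_rpow_le one_lt_goldenRatio hN, rpow_natCast]
    exact (goldenRatio_pow_le_fib_add_two k).trans (by exact_mod_cast hfib)
  push_cast
  linarith

theorem Set.biUnion_Ico_Ioc_eq_Ioc {α : Type*} [LinearOrder α] {f : ℕ → α} (hf : Monotone f)
    {a b : ℕ} (hab : a ≤ b) :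
    ⋃ i ∈ Set.Ico a b, Set.Ioc (f i) (f (i + 1)) = Set.Ioc (f a) (f b) := by
  induction b, hab using Nat.le_induction with
  | base => simp
  | succ b hab ih =>
    rw [Set.Ico_add_one_right_eq_Icc, ← Set.Ico_insert_right hab, Set.biUnion_insert, ih,
      Set.union_comm, Set.Ioc_union_Ioc_eq_Ioc (hf hab) (hf b.le_succ)]

lemma Set.Icc_one_eq_Ioc_zero (n : ℕ) : Set.Icc 1 n = Set.Ioc 0 n :=
  Set.Icc_add_one_left_eq_Ioc 0 n

lemma Set.Icc_add_one_add_sub_one (q L : ℕ) :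
    Set.Icc (q + 1) (q + 1 + L - 1) = Set.Ioc q (q + L) := by
  rw [Set.Icc_add_one_left_eq_Ioc, Nat.add_right_comm, Nat.add_sub_cancel]

lemma biUnion_Icc_consecutive_eq_Ioc (q L n : ℕ) :
    ⋃ j ∈ Set.Icc 1 n, Set.Icc (q + (j - 1) * L + 1) (q + (j - 1) * L + 1 + L - 1)
      = Set.Ioc q (q + n * L) := by
  have hmono : Monotone fun j => q + (j - 1) * L := fun i j hij => by
    dsimp only; gcongr
  have := Set.biUnion_Ico_Ioc_eq_Ioc hmono (Nat.le_add_left 1 n)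
  simp only [Nat.add_sub_cancel, Nat.sub_self, zero_mul, add_zero] at this
  rw [← this, ← Set.Ico_add_one_right_eq_Icc]
  refine Set.iUnion₂_congr fun j hj => ?_
  obtain ⟨k, rfl⟩ := Nat.exists_eq_add_of_le' (Set.mem_Ico.1 hj).1
  rw [Set.Icc_add_one_add_sub_one, Nat.add_sub_cancel]
  congr 1
  ring

lemma F_succ_le_two_mul (i : ℕ) : F (i + 1) ≤ 2 * F i := by
  simp only [F, Nat.fib_add_two]
  linarith [Nat.fib_le_fib_succ (n := i)]

def blockStart (s : ℕ) (b : ℕ → ℕ) (i : ℕ) : ℕ := s + ∑ k ∈ Finset.Ico 2 i, b k * F k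

section blockStart

variable {s : ℕ} {b : ℕ → ℕ}

lemma blockStart_monotone : Monotone (blockStart s b) := fun _ _ hij =>
  Nat.add_le_add_left (Finset.sum_le_sum_of_subset (Finset.Ico_subset_Ico_right hij)) s

lemma blockStart_two : blockStart s b 2 = s := by simp [blockStart]

lemma blockStart_succ {i : ℕ} (hi : 2 ≤ i) :
    blockStart s b (i + 1) = blockStart s b i + b i * F i := by
  rw [blockStart, Finset.sum_Ico_succ_top hi, ← add_assoc, blockStart]

lemma blockStart_add_one (r : ℕ) :
    blockStart s b (r + 1) = s + ∑ i ∈ Finset.Icc 2 r, b i * F i := by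
  rw [blockStart, Finset.Ico_add_one_right_eq_Icc]

lemma F_le_blockStart_add_one (hs : 1 ≤ s) (hb : ∀ k, 1 ≤ b k) {i : ℕ} (hi : 2 ≤ i) :
    F i ≤ blockStart s b i + 1 := by
  induction i, hi using Nat.le_induction with
  | base => rw [blockStart_two]; exact Nat.add_le_add_right hs 1
  | succ i hi ih =>
    rw [blockStart_succ hi]
    have := F_succ_le_two_mul i
    have := Nat.le_mul_of_pos_left (F i) (hb i)
    omega

lemma biUnion_Icc_blocks_eq_Ioc {r : ℕ} (hr : 1 ≤ r) :
    ⋃ i ∈ Set.Icc 2 r, ⋃ j ∈ Set.Icc 1 (b i),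
      Set.Icc (blockStart s b i + (j - 1) * F i + 1)
        (blockStart s b i + (j - 1) * F i + 1 + F i - 1) = Set.Ioc s (blockStart s b (r + 1)) := by
  have htile := Set.biUnion_Ico_Ioc_eq_Ioc (blockStart_monotone (s := s) (b := b))
    (show 2 ≤ r + 1 by omega)
  rw [blockStart_two] at htile
  rw [← htile, ← Set.Ico_add_one_right_eq_Icc]
  refine Set.iUnion₂_congr fun i hi => ?_
  rw [biUnion_Icc_consecutive_eq_Ioc, blockStart_succ (Set.mem_Ico.1 hi).1]

end blockStart

lemma exists_block_sizes_of_fib_le_of_lt_fib {r : ℕ} (hr : 1 ≤ r) {N : ℕ}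
    (hlo : Nat.fib (r + 3) ≤ N + 2) (hhi : N + 2 < Nat.fib (r + 4)) :
    ∃ s ∈ ({1, 2, 3} : Set ℕ), ∃ b : ℕ → ℕ, (∀ i, b i ∈ ({1, 2} : Set ℕ)) ∧
      s + ∑ i ∈ Finset.Icc 2 r, b i * F i = N := by
  induction r, hr using Nat.le_induction generalizing N with
  | base =>
    change 3 ≤ N + 2 at hlo
    change N + 2 < 5 at hhi
    refine ⟨N, ?_, fun _ => 1, fun _ => by simp, by simp⟩
    simp only [Set.mem_insert_iff, Set.mem_singleton_iff]
    omega
  | succ r hr ih =>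
    change Nat.fib (r + 4) ≤ N + 2 at hlo
    change N + 2 < Nat.fib (r + 5) at hhi
    have h3 : Nat.fib (r + 3) = Nat.fib (r + 1) + Nat.fib (r + 2) := Nat.fib_add_two
    have h4 : Nat.fib (r + 4) = Nat.fib (r + 2) + Nat.fib (r + 3) := Nat.fib_add_two
    have h5 : Nat.fib (r + 5) = Nat.fib (r + 3) + Nat.fib (r + 4) := Nat.fib_add_two
    have hmono : Nat.fib (r + 1) ≤ Nat.fib (r + 2) := Nat.fib_le_fib_succ
    have htwo : 2 ≤ Nat.fib (r + 3) := Nat.fib_mono (show 3 ≤ r + 3 by omega)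
    have hF : F (r + 1) = Nat.fib (r + 2) := rfl
    obtain ⟨t, ht, htN, hlo', hhi'⟩ : ∃ t ∈ ({1, 2} : Set ℕ), t * F (r + 1) ≤ N ∧
        Nat.fib (r + 3) ≤ N - t * F (r + 1) + 2 ∧ N - t * F (r + 1) + 2 < Nat.fib (r + 4) := by
      by_cases hsmall : N + 2 < Nat.fib (r + 4) + Nat.fib (r + 2)
      · exact ⟨1, by simp, by omega, by omega, by omega⟩
      · exact ⟨2, by simp, by omega, by omega, by omega⟩
    obtain ⟨s, hs, b, hb, hsum⟩ := ih hlo' hhi'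
    refine ⟨s, hs, Function.update b (r + 1) t, fun i => ?_, ?_⟩
    · rcases eq_or_ne i (r + 1) with rfl | hi
      · simpa using ht
      · simpa [hi] using hb i
    · rw [Finset.sum_Icc_succ_top (by omega), Function.update_self,
        Finset.sum_congr rfl fun i hi => by
          rw [Function.update_of_ne (by simp at hi; omega)]]
      omega

theorem stmt2 (N : ℕ) (hN : 0 < N) :
    ∃ (r s : ℕ) (b : ℕ → ℕ) (R : ℕ → ℕ → ℕ),
      s ∈ ({1, 2, 3} : Set ℕ) ∧
      (r : ℝ) ≤ 1 + Real.logb phi N ∧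
      (∀ i, 2 ≤ i → i ≤ r → b i ∈ ({1, 2} : Set ℕ)) ∧
      (∀ i, 2 ≤ i → i ≤ r → ∀ j, 1 ≤ j → j ≤ b i → F i ≤ R i j) ∧
      (Set.Icc 1 N =
        Set.Icc 1 s ∪
          ⋃ i ∈ Set.Icc 2 r, ⋃ j ∈ Set.Icc 1 (b i),
            Set.Icc (R i j) (R i j + F i - 1)) ∧
      -- the total number of elements of the pieces equals `N`, so together with the
      -- covering property above the pieces are pairwise disjoint (a partition)
      s + ∑ i ∈ Finset.Icc 2 r, b i * F i = N := by
  obtain ⟨k, hk, hlo, hhi⟩ := exists_fib_le_lt_fib_succ (m := 4) (n := N + 2)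
    (by rw [show Nat.fib 4 = 3 from rfl]; omega)
  obtain ⟨r, rfl⟩ : ∃ r, k = r + 3 := ⟨k - 3, by omega⟩
  obtain ⟨s, hs, b, hb, hsum⟩ :=
    exists_block_sizes_of_fib_le_of_lt_fib (by omega : 1 ≤ r) hlo hhi
  have hs1 : 1 ≤ s := by rcases hs with rfl | rfl | rfl <;> norm_num
  have hb1 : ∀ i, 1 ≤ b i := fun i => by rcases hb i with h | h <;> simp_all
  refine ⟨r, s, b, fun i j => blockStart s b i + (j - 1) * F i + 1, hs,
    natCast_le_one_add_logb_of_fib_le (by omega) hlo, fun i _ _ => hb i, ?_, ?_, hsum⟩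
  · intro i hi _ j _ _
    exact (F_le_blockStart_add_one hs1 hb1 hi).trans (by simp)
  · rw [biUnion_Icc_blocks_eq_Ioc (by omega), blockStart_add_one, hsum, Set.Icc_one_eq_Ioc_zero,
      Set.Icc_one_eq_Ioc_zero, Set.Ioc_union_Ioc_eq_Ioc (Nat.zero_le s) (by omega)]
end

section
/- There exists α ∈ ℝ and a constant M > 0 such that for every N ≥ 2, the discrepancy D_N of the finite sequence ({α·n!})_{1 ≤ n ≤ N} satisfies D_N ≤ M log N. -/
/-!
Take `α = ∑ₖ eₖ / (k+1)!` in the factorial number system, with digits `eₙ = ⌊n xₙ⌋` read off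
the van der Corput sequence `xₙ`. Then `α n!` is an integer plus the tail `∑_{k ≥ n} eₖ n!/(k+1)!`,
which lies in `[0, 1)` because `eₙ < n`, and is within `2/(n+1)` of `xₙ`.

The van der Corput sequence has discrepancy `O(log N)` by its self-similarity
`x₂ₙ = xₙ / 2`, `x₂ₙ₊₁ = (1 + xₙ) / 2`. Moving the `n`-th point by less than `2/(n+1)` changes the
number of points below `γ` only at indices `n` with `|xₙ - γ| < 2/(n+1)`. For `2ᵗ ≤ n < 2ᵗ⁺¹`
the `xₙ` are distinct odd multiples of `2⁻ᵗ⁻¹`, so at most four of them are that close to `γ`,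
and the perturbation costs another `O(log N)`.
-/

open Finset
open scoped Nat

theorem Finset.sum_range_two_mul {M : Type*} [AddCommMonoid M] (f : ℕ → M) (q : ℕ) :
    ∑ i ∈ range (2 * q), f i = ∑ m ∈ range q, (f (2 * m) + f (2 * m + 1)) := by
  induction q with
  | zero => simp
  | succ q ih =>
    rw [show 2 * (q + 1) = 2 * q + 1 + 1 by ring, sum_range_succ, sum_range_succ, ih,
      sum_range_succ, add_assoc]

theorem card_le_of_separated {ι : Type*} (s : Finset ι) (f : ι → ℝ) {δ γ : ℝ} (r : ℕ)
    (hδ : 0 < δ) (hsep : ∀ i ∈ s, ∀ j ∈ s, i ≠ j → δ ≤ |f i - f j|)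
    (hs : ∀ i ∈ s, |f i - γ| < r * δ) : #s ≤ 2 * r := by
  have hcard : #(Ico (-r : ℤ) r) = 2 * r := by
    rw [Int.card_Ico]
    omega
  rw [← hcard]
  refine card_le_card_of_injOn (fun i => ⌊(f i - γ) / δ⌋) (fun i hi => ?_) (fun i hi j hj hij => ?_)
  · have h := abs_lt.1 (hs i hi)
    simp only [coe_Ico, Set.mem_Ico, Int.le_floor, Int.floor_lt, le_div_iff₀ hδ, div_lt_iff₀ hδ]
    push_cast
    constructor <;> linarith
  · by_contra hne
    have hi' := Int.floor_le ((f i - γ) / δ)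
    have hi'' := Int.lt_floor_add_one ((f i - γ) / δ)
    have hj' := Int.floor_le ((f j - γ) / δ)
    have hj'' := Int.lt_floor_add_one ((f j - γ) / δ)
    simp only at hij
    rw [hij] at hi' hi''
    have hclose : |(f i - γ) / δ - (f j - γ) / δ| < 1 := abs_sub_lt_iff.2 ⟨by linarith, by linarith⟩
    rw [← sub_div, sub_sub_sub_cancel_right, abs_div, abs_of_pos hδ, div_lt_one hδ] at hclose
    linarith [hsep i (mem_coe.1 hi) j (mem_coe.1 hj) hne]

theorem abs_card_filter_sub_card_filter_le {ι : Type*} (s : Finset ι) (x y ε : ι → ℝ) (γ : ℝ)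
    (h : ∀ i ∈ s, |y i - x i| < ε i) :
    |(#{i ∈ s | y i ≤ γ} : ℝ) - #{i ∈ s | x i ≤ γ}| ≤ #{i ∈ s | |x i - γ| < ε i} := by
  rw [natCast_card_filter, natCast_card_filter, natCast_card_filter, ← sum_sub_distrib]
  refine (abs_sum_le_sum_abs _ _).trans (sum_le_sum fun i hi => ?_)
  have hi := abs_lt.1 (h i hi)
  split_ifs with hy hx hclose hclose hx hclose <;> norm_num <;>
    exact hclose (abs_lt.2 ⟨by linarith, by linarith⟩)

section FactorialTail

variable (e : ℕ → ℕ)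

noncomputable def factorialTail (n : ℕ) : ℝ := ∑' k, (e (n + k) : ℝ) * n ! / (n + k + 1)!

variable {e}

theorem factorialTail_term_le (he : ∀ k, e k ≤ k) (n k : ℕ) :
    (e (n + k) : ℝ) * n ! / (n + k + 1)! ≤ (n ! : ℝ) / (n + k)! - n ! / (n + k + 1)! := by
  have hfac : ((n + k + 1)! : ℝ) = (n + k + 1) * (n + k)! := by
    push_cast [Nat.factorial_succ]; ring
  have hdiff : (n ! : ℝ) / (n + k)! - n ! / (n + k + 1)! = (n + k) * n ! / (n + k + 1)! := by
    rw [hfac]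
    field_simp
    ring
  rw [hdiff]
  gcongr
  exact_mod_cast he (n + k)

theorem sum_range_factorialTail_term_le_one (he : ∀ k, e k ≤ k) (n K : ℕ) :
    ∑ k ∈ range K, (e (n + k) : ℝ) * n ! / (n + k + 1)! ≤ 1 := by
  calc ∑ k ∈ range K, (e (n + k) : ℝ) * n ! / (n + k + 1)!
      ≤ ∑ k ∈ range K, ((n ! : ℝ) / (n + k)! - n ! / (n + (k + 1))!) :=
        sum_le_sum fun k _ => factorialTail_term_le he n k
    _ = 1 - n ! / (n + K)! := by
        rw [sum_range_sub' (fun k => (n ! : ℝ) / (n + k)!), add_zero, div_self (by positivity)]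
    _ ≤ 1 := by
        have : (0 : ℝ) ≤ n ! / (n + K)! := by positivity
        linarith

theorem summable_factorialTail_term (he : ∀ k, e k ≤ k) (n : ℕ) :
    Summable fun k => (e (n + k) : ℝ) * n ! / (n + k + 1)! :=
  summable_of_sum_range_le (fun _ => by positivity) (sum_range_factorialTail_term_le_one he n)

theorem factorialTail_nonneg (n : ℕ) : 0 ≤ factorialTail e n :=
  tsum_nonneg fun _ => by positivity

theorem factorialTail_le_one (he : ∀ k, e k ≤ k) (n : ℕ) : factorialTail e n ≤ 1 :=
  (summable_factorialTail_term he n).tsum_le_of_sum_range_le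
    (sum_range_factorialTail_term_le_one he n)

theorem factorialTail_succ (he : ∀ k, e k ≤ k) (n : ℕ) :
    (n + 1) * factorialTail e n = e n + factorialTail e (n + 1) := by
  have hshift : ∀ k, (e (n + (k + 1)) : ℝ) * n ! / (n + (k + 1) + 1)! =
      (e (n + 1 + k) : ℝ) * (n + 1)! / (n + 1 + k + 1)! / (n + 1) := by
    intro k
    rw [show n + (k + 1) = n + 1 + k by ring, Nat.factorial_succ n]
    push_cast
    field_simp
  rw [factorialTail, (summable_factorialTail_term he n).tsum_eq_zero_add]
  simp_rw [hshift]
  rw [tsum_div_const, ← factorialTail, add_zero, Nat.factorial_succ n]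
  push_cast
  field_simp

theorem factorialTail_lt_one (he : ∀ k, e k ≤ k) {n : ℕ} (hn : e n < n) :
    factorialTail e n < 1 := by
  have hrec := factorialTail_succ he n
  have hle := factorialTail_le_one he (n + 1)
  have hen : (e n : ℝ) + 1 ≤ n := by exact_mod_cast hn
  nlinarith

theorem exists_factorialTail_zero_mul_factorial_sub_eq_int (he : ∀ k, e k ≤ k) (n : ℕ) :
    ∃ z : ℤ, factorialTail e 0 * (n ! : ℝ) - factorialTail e n = z := by
  induction n with
  | zero => exact ⟨0, by simp⟩
  | succ n ih =>
    obtain ⟨z, hz⟩ := ih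
    refine ⟨(n + 1) * z + e n, ?_⟩
    have hrec := factorialTail_succ he n
    push_cast [Nat.factorial_succ]
    rw [← hz]
    linear_combination hrec

theorem fract_factorialTail_zero_mul_factorial (he : ∀ k, e k ≤ k) {n : ℕ} (hn : e n < n) :
    Int.fract (factorialTail e 0 * n !) = factorialTail e n :=
  Int.fract_eq_iff.2 ⟨factorialTail_nonneg n, factorialTail_lt_one he hn,
    exists_factorialTail_zero_mul_factorial_sub_eq_int he n⟩

end FactorialTail

theorem exists_abs_fract_mul_factorial_sub_lt (x : ℕ → ℝ) (hx0 : ∀ n, 0 ≤ x n)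
    (hx1 : ∀ n, x n < 1) :
    ∃ α : ℝ, ∀ n, 1 ≤ n → |Int.fract (α * n !) - x n| < 2 / (n + 1) := by
  set e : ℕ → ℕ := fun n => ⌊n * x n⌋₊
  have hlt : ∀ n, 1 ≤ n → e n < n := fun n hn =>
    (Nat.floor_lt (by have := hx0 n; positivity)).2 <| by
      have : (1 : ℝ) ≤ n := by exact_mod_cast hn
      nlinarith [hx1 n]
  have he : ∀ k, e k ≤ k := fun k =>
    Nat.floor_le_of_le (mul_le_of_le_one_right k.cast_nonneg (hx1 k).le)
  refine ⟨factorialTail e 0, fun n hn => ?_⟩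
  rw [fract_factorialTail_zero_mul_factorial he (hlt n hn)]
  have hrec := factorialTail_succ he n
  have hnext0 := factorialTail_nonneg (e := e) (n + 1)
  have hnext1 := factorialTail_lt_one he (hlt (n + 1) (by omega))
  have hfloor := Nat.floor_le (a := n * x n) (by have := hx0 n; positivity)
  have hfloor' := Nat.lt_floor_add_one (n * x n)
  have hpos : (0 : ℝ) < n + 1 := by positivity
  rw [lt_div_iff₀ hpos, ← abs_of_pos hpos, ← abs_mul, abs_lt]
  constructor <;> nlinarith [hx0 n, hx1 n]

noncomputable def vanDerCorput (n : ℕ) : ℝ :=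
  (n.bitIndices.map fun i => (2 : ℝ)⁻¹ ^ (i + 1)).sum

@[simp]
theorem vanDerCorput_zero : vanDerCorput 0 = 0 := by
  simp [vanDerCorput]

theorem vanDerCorput_two_mul (n : ℕ) : vanDerCorput (2 * n) = vanDerCorput n / 2 := by
  simp only [vanDerCorput, Nat.bitIndices_two_mul, List.map_map, Function.comp_def,
    pow_succ _ (_ + 1), List.sum_map_mul_right, div_eq_mul_inv]

theorem vanDerCorput_two_mul_add_one (n : ℕ) :
    vanDerCorput (2 * n + 1) = (1 + vanDerCorput n) / 2 := by
  simp only [vanDerCorput, Nat.bitIndices_two_mul_add_one, List.map_cons, List.sum_cons,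
    List.map_map, Function.comp_def, pow_succ _ (_ + 1), List.sum_map_mul_right]
  ring

theorem vanDerCorput_one : vanDerCorput 1 = 1 / 2 := by
  simpa using vanDerCorput_two_mul_add_one 0

theorem vanDerCorput_nonneg (n : ℕ) : 0 ≤ vanDerCorput n := by
  induction n using Nat.evenOddRec with
  | h0 => simp
  | h_even n ih => rw [vanDerCorput_two_mul]; positivity
  | h_odd n ih => rw [vanDerCorput_two_mul_add_one]; positivity

theorem vanDerCorput_lt_one (n : ℕ) : vanDerCorput n < 1 := by
  induction n using Nat.evenOddRec with
  | h0 => simp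
  | h_even n ih => rw [vanDerCorput_two_mul]; linarith
  | h_odd n ih => rw [vanDerCorput_two_mul_add_one]; linarith

theorem vanDerCorput_eq_zero_iff {n : ℕ} : vanDerCorput n = 0 ↔ n = 0 := by
  induction n using Nat.evenOddRec with
  | h0 => simp
  | h_even n ih => simp [vanDerCorput_two_mul, ih]
  | h_odd n _ =>
    rw [vanDerCorput_two_mul_add_one]
    have := vanDerCorput_nonneg n
    constructor <;> intro h
    · linarith
    · omega

theorem vanDerCorput_lt_half_iff {n : ℕ} : vanDerCorput n < 1 / 2 ↔ Even n := by
  obtain ⟨m, rfl | rfl⟩ := n.even_or_odd'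
  · simp only [vanDerCorput_two_mul, even_two_mul, iff_true]
    linarith [vanDerCorput_lt_one m]
  · simp only [vanDerCorput_two_mul_add_one, Nat.not_even_two_mul_add_one, iff_false, not_lt]
    linarith [vanDerCorput_nonneg m]

theorem vanDerCorput_injective : Function.Injective vanDerCorput := by
  intro a b hab
  induction a using Nat.evenOddRec generalizing b with
  | h0 => exact (vanDerCorput_eq_zero_iff.1 hab.symm).symm
  | h_even a ih =>
    obtain ⟨b, rfl | rfl⟩ := b.even_or_odd'
    · rw [vanDerCorput_two_mul, vanDerCorput_two_mul] at hab
      rw [ih (by linarith)]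
    · have := vanDerCorput_lt_half_iff.1 (hab ▸ vanDerCorput_lt_half_iff.2 (even_two_mul a))
      simp at this
  | h_odd a ih =>
    obtain ⟨b, rfl | rfl⟩ := b.even_or_odd'
    · have := vanDerCorput_lt_half_iff.1 (hab ▸ vanDerCorput_lt_half_iff.2 (even_two_mul b))
      simp at this
    · rw [vanDerCorput_two_mul_add_one, vanDerCorput_two_mul_add_one] at hab
      rw [ih (by linarith)]

theorem card_filter_range_two_mul_vanDerCorput_le (q : ℕ) (γ : ℝ) :
    #{n ∈ range (2 * q) | vanDerCorput n ≤ γ} =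
      #{m ∈ range q | vanDerCorput m ≤ 2 * γ} + #{m ∈ range q | vanDerCorput m ≤ 2 * γ - 1} := by
  simp only [card_filter, sum_range_two_mul, sum_add_distrib, vanDerCorput_two_mul,
    vanDerCorput_two_mul_add_one]
  congr 1 <;> refine sum_congr rfl fun m _ => ?_ <;> congr 1 <;> apply propext <;> constructor <;>
    intro h <;> linarith

theorem card_filter_range_vanDerCorput_le_of_neg {c : ℝ} (hc : c < 0) (q : ℕ) :
    #{m ∈ range q | vanDerCorput m ≤ c} = 0 :=
  card_eq_zero.2 <| filter_eq_empty_iff.2 fun m _ => not_le.2 (hc.trans_le (vanDerCorput_nonneg m))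

theorem card_filter_range_vanDerCorput_le_of_one_le {c : ℝ} (hc : 1 ≤ c) (q : ℕ) :
    #{m ∈ range q | vanDerCorput m ≤ c} = q := by
  rw [filter_true_of_mem fun m _ => (vanDerCorput_lt_one m).le.trans hc, card_range]

theorem abs_card_filter_range_vanDerCorput_le {k N : ℕ} (hN : N ≤ 2 ^ k) {γ : ℝ} (hγ0 : 0 ≤ γ)
    (hγ1 : γ < 1) : |(#{n ∈ range N | vanDerCorput n ≤ γ} : ℝ) - N * γ| ≤ k + 1 := by
  induction k generalizing N γ with
  | zero =>
    interval_cases N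
    · simp
    · rw [range_one, filter_singleton, if_pos (by simpa using hγ0)]
      simp only [card_singleton, Nat.cast_one, one_mul, abs_le]
      constructor <;> linarith
  | succ k ih =>
    have heven : ∀ q ≤ 2 ^ k,
        |(#{n ∈ range (2 * q) | vanDerCorput n ≤ γ} : ℝ) - 2 * q * γ| ≤ k + 1 := by
      intro q hq
      rw [card_filter_range_two_mul_vanDerCorput_le]
      rcases lt_or_ge γ (1 / 2) with hγ | hγ
      · rw [card_filter_range_vanDerCorput_le_of_neg (c := 2 * γ - 1) (by linarith), add_zero,
          show 2 * (q : ℝ) * γ = q * (2 * γ) by ring]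
        exact ih hq (by linarith) (by linarith)
      · rw [card_filter_range_vanDerCorput_le_of_one_le (c := 2 * γ) (by linarith), Nat.cast_add,
          show (q + #{m ∈ range q | vanDerCorput m ≤ 2 * γ - 1} : ℝ) - 2 * q * γ =
            #{m ∈ range q | vanDerCorput m ≤ 2 * γ - 1} - q * (2 * γ - 1) by ring]
        exact ih hq (by linarith) (by linarith)
    obtain ⟨q, rfl | rfl⟩ := N.even_or_odd'
    · have := heven q (by rw [pow_succ] at hN; omega)
      push_cast at this ⊢
      linarith
    · have h2q := heven q (by rw [pow_succ] at hN; omega)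
      have hlast : |(if vanDerCorput (2 * q) ≤ γ then 1 else 0 : ℝ) - γ| ≤ 1 := by
        split_ifs <;> rw [abs_le] <;> constructor <;> linarith
      rw [natCast_card_filter, sum_range_succ, ← natCast_card_filter]
      calc _ = |((#{n ∈ range (2 * q) | vanDerCorput n ≤ γ} : ℝ) - 2 * q * γ) +
              ((if vanDerCorput (2 * q) ≤ γ then 1 else 0 : ℝ) - γ)| := by push_cast; ring_nf
        _ ≤ _ := (abs_add_le _ _).trans (by push_cast; linarith)

theorem abs_card_filter_Icc_vanDerCorput_le (N : ℕ) {γ : ℝ} (hγ0 : 0 ≤ γ) (hγ1 : γ < 1) :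
    |(#{n ∈ Icc 1 N | vanDerCorput n ≤ γ} : ℝ) - N * γ| ≤ Nat.log 2 N + 3 := by
  have hrange : range (N + 1) = insert 0 (Icc 1 N) := by
    ext n
    simp only [mem_range, mem_insert, mem_Icc]
    omega
  have hcount : (#{n ∈ range (N + 1) | vanDerCorput n ≤ γ} : ℝ) =
      #{n ∈ Icc 1 N | vanDerCorput n ≤ γ} + 1 := by
    rw [hrange, filter_insert, if_pos (by simpa using hγ0), card_insert_of_notMem (by simp)]
    push_cast
    ring
  have h := abs_card_filter_range_vanDerCorput_le (k := Nat.log 2 N + 1)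
    (Nat.lt_pow_succ_log_self one_lt_two N) hγ0 hγ1
  rw [hcount, abs_le] at h
  rw [abs_le]
  push_cast at h ⊢
  constructor <;> linarith

theorem exists_odd_vanDerCorput_mul_two_pow {t n : ℕ} (hn : n ∈ Ico (2 ^ t) (2 ^ (t + 1))) :
    ∃ m : ℕ, Odd m ∧ vanDerCorput n * 2 ^ (t + 1) = m := by
  rw [mem_Ico] at hn
  induction t generalizing n with
  | zero =>
    obtain rfl : n = 1 := by omega
    exact ⟨1, odd_one, by norm_num [vanDerCorput_one]⟩
  | succ t ih =>
    obtain ⟨n, rfl | rfl⟩ := n.even_or_odd'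
    · obtain ⟨m, hm, hvm⟩ := ih (n := n) ⟨by omega, by omega⟩
      refine ⟨m, hm, ?_⟩
      rw [vanDerCorput_two_mul, ← hvm]
      ring
    · obtain ⟨m, hm, hvm⟩ := ih (n := n) ⟨by omega, by omega⟩
      refine ⟨2 ^ (t + 1) + m, (Nat.even_pow.2 ⟨even_two, by omega⟩).add_odd hm, ?_⟩
      rw [vanDerCorput_two_mul_add_one]
      push_cast
      rw [← hvm]
      ring

theorem inv_two_pow_le_abs_vanDerCorput_sub {t n n' : ℕ} (hn : n ∈ Ico (2 ^ t) (2 ^ (t + 1)))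
    (hn' : n' ∈ Ico (2 ^ t) (2 ^ (t + 1))) (hne : n ≠ n') :
    (2 ^ t : ℝ)⁻¹ ≤ |vanDerCorput n - vanDerCorput n'| := by
  obtain ⟨_, ⟨a, rfl⟩, hva⟩ := exists_odd_vanDerCorput_mul_two_pow hn
  obtain ⟨_, ⟨b, rfl⟩, hvb⟩ := exists_odd_vanDerCorput_mul_two_pow hn'
  have hab : (a : ℤ) ≠ b := by
    intro h
    apply hne (vanDerCorput_injective _)
    have : (2 : ℝ) ^ (t + 1) ≠ 0 := by positivity
    apply mul_right_cancel₀ this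
    rw [hva, hvb, show a = b by exact_mod_cast h]
  have hgap : (1 : ℝ) ≤ |(a : ℝ) - b| := by exact_mod_cast Int.one_le_abs (sub_ne_zero.2 hab)
  have hdiff : (vanDerCorput n - vanDerCorput n') * 2 ^ (t + 1) = 2 * ((a : ℝ) - b) := by
    rw [sub_mul, hva, hvb]
    push_cast
    ring
  have hpow : (0 : ℝ) < 2 ^ (t + 1) := by positivity
  have hscaled : 2 ≤ |vanDerCorput n - vanDerCorput n'| * 2 ^ (t + 1) := by
    rw [← abs_of_pos hpow, ← abs_mul, hdiff, abs_mul, abs_two]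
    linarith
  rw [inv_le_iff_one_le_mul₀ (by positivity)]
  rw [pow_succ] at hscaled
  linarith

theorem card_filter_Ico_vanDerCorput_near_le (t : ℕ) (γ : ℝ) :
    #{n ∈ Ico (2 ^ t) (2 ^ (t + 1)) | |vanDerCorput n - γ| < 2 / 2 ^ t} ≤ 4 :=
  card_le_of_separated _ vanDerCorput 2 (by positivity)
    (fun i hi j hj hij =>
      inv_two_pow_le_abs_vanDerCorput_sub (mem_filter.1 hi).1 (mem_filter.1 hj).1 hij)
    (fun i hi => by simpa [div_eq_mul_inv] using (mem_filter.1 hi).2)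

theorem card_filter_Icc_vanDerCorput_near_le (N : ℕ) (γ : ℝ) :
    #{n ∈ Icc 1 N | |vanDerCorput n - γ| < 2 / (n + 1)} ≤ 4 * (Nat.log 2 N + 1) := by
  have hsub : {n ∈ Icc 1 N | |vanDerCorput n - γ| < 2 / (n + 1)} ⊆
      (range (Nat.log 2 N + 1)).biUnion
        fun t => {n ∈ Ico (2 ^ t) (2 ^ (t + 1)) | |vanDerCorput n - γ| < 2 / 2 ^ t} := by
    intro n hn
    obtain ⟨hn, hclose⟩ := mem_filter.1 hn
    obtain ⟨hn1, hnN⟩ := mem_Icc.1 hn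
    have hlow : 2 ^ Nat.log 2 n ≤ n := Nat.pow_log_le_self 2 (by omega)
    refine mem_biUnion.2 ⟨Nat.log 2 n, mem_range.2 (Nat.lt_succ_of_le (Nat.log_mono_right hnN)),
      mem_filter.2 ⟨mem_Ico.2 ⟨hlow, Nat.lt_pow_succ_log_self one_lt_two n⟩, ?_⟩⟩
    refine hclose.trans_le (div_le_div_of_nonneg_left zero_le_two (by positivity) ?_)
    have : ((2 ^ Nat.log 2 n : ℕ) : ℝ) ≤ n := by exact_mod_cast hlow
    push_cast at this
    linarith
  calc _ ≤ #((range (Nat.log 2 N + 1)).biUnion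
        fun t => {n ∈ Ico (2 ^ t) (2 ^ (t + 1)) | |vanDerCorput n - γ| < 2 / 2 ^ t}) :=
        card_le_card hsub
    _ ≤ #(range (Nat.log 2 N + 1)) * 4 :=
        card_biUnion_le_card_mul _ _ _ fun t _ => card_filter_Ico_vanDerCorput_near_le t γ
    _ = 4 * (Nat.log 2 N + 1) := by rw [card_range, mul_comm]

theorem natLog_two_add_one_le_three_mul_log {N : ℕ} (hN : 2 ≤ N) :
    (Nat.log 2 N + 1 : ℝ) ≤ 3 * Real.log N := by
  have hL : (1 : ℝ) ≤ Nat.log 2 N := by exact_mod_cast Nat.log_pos one_lt_two hN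
  have hlog : Nat.log 2 N * Real.log 2 ≤ Real.log N := by
    rw [← Real.log_pow]
    exact Real.log_le_log (by positivity) (by exact_mod_cast Nat.pow_log_le_self 2 (by omega))
  have := Real.log_two_gt_d9
  nlinarith

theorem stmt12 :
    ∃ (α : ℝ) (M : ℝ), 0 < M ∧ ∀ N : ℕ, 2 ≤ N →
      ∀ γ ∈ Set.Ico (0 : ℝ) 1,
        |(N : ℝ) * γ -
          ((Finset.Icc 1 N).filter
            (fun k => Int.fract (α * Nat.factorial k) ≤ γ)).card| ≤
          M * Real.log N := by
  obtain ⟨α, hα⟩ := exists_abs_fract_mul_factorial_sub_lt vanDerCorput vanDerCorput_nonneg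
    vanDerCorput_lt_one
  refine ⟨α, 21, by norm_num, fun N hN γ ⟨hγ0, hγ1⟩ => ?_⟩
  have hmismatch := abs_card_filter_sub_card_filter_le (Icc 1 N) vanDerCorput
    (fun k => Int.fract (α * k !)) (fun k => 2 / (k + 1)) γ fun k hk => hα k (mem_Icc.1 hk).1
  have hnear : (#{n ∈ Icc 1 N | |vanDerCorput n - γ| < 2 / (n + 1)} : ℝ) ≤
      4 * (Nat.log 2 N + 1) := by
    exact_mod_cast card_filter_Icc_vanDerCorput_near_le N γ
  have hvdc := abs_card_filter_Icc_vanDerCorput_le N hγ0 hγ1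
  have hlog := natLog_two_add_one_le_three_mul_log hN
  rw [abs_le] at hmismatch hvdc ⊢
  constructor <;> linarith
end

section
/- Let α ∈ ℝ satisfy ‖α n_k − {φ k}‖ ≤ c/k for all k ≥ 1, and let i ≥ 2 and R ≥ F_i be integers. Then there is a bijection σ : {0,...,F_i−1} → {1,...,F_i} such that ‖α n_{R+k} − σ(k)/F_i‖ ≤ (1+c)/F_i for all 0 ≤ k ≤ F_i − 1, where ‖·‖ is the distance to the nearest integer, {·} the fractional part, φ = (1+√5)/2, and F_i Fibonacci numbers with F_0 = F_1 = 1. -/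
/-- Distance from `x` to the nearest integer. -/
noncomputable def nd (x : ℝ) : ℝ := |x - round x|

/-!
The convergent `p/q = F (i+1) / F i` of `φ` satisfies `q |qφ - p| ≤ 1`. Hence on a block of
`q` consecutive integers, `q φ (R + k)` differs from the integer `⌊q φ R⌋ + e + k p` by at most `1`
(for a suitable `e ∈ {0, 1}` depending on the sign of `qφ - p`), and since `p` is coprime to `q`
these integers run through all residues modulo `q`. So `{φ (R + k)}` lies within `1/q` of a
permutation of the points `j/q`, and the hypothesis on `α n_k` adds at most `c/(R+k) ≤ c/q`.
-/

lemma nd_nonneg (x : ℝ) : 0 ≤ nd x := abs_nonneg _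

lemma nd_le_abs_sub_intCast (x : ℝ) (m : ℤ) : nd x ≤ |x - m| := round_le x m

lemma nd_add_intCast (x : ℝ) (m : ℤ) : nd (x + m) = nd x := by
  simp only [nd, round_add_intCast, Int.cast_add, add_sub_add_right_eq_sub]

lemma nd_fract_sub (x y : ℝ) : nd (Int.fract x - y) = nd (x - y) := by
  rw [Int.fract, show x - ⌊x⌋ - y = x - y + ((-⌊x⌋ : ℤ) : ℝ) by push_cast; ring, nd_add_intCast]

lemma nd_sub_le (x y z : ℝ) : nd (x - z) ≤ nd (x - y) + nd (y - z) := by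
  refine (nd_le_abs_sub_intCast (x - z) (round (x - y) + round (y - z))).trans ?_
  calc |x - z - ((round (x - y) + round (y - z) : ℤ) : ℝ)|
      = |(x - y - round (x - y)) + (y - z - round (y - z))| := by push_cast; ring_nf
    _ ≤ nd (x - y) + nd (y - z) := abs_add_le _ _

lemma nd_sub_div_le {q : ℕ} (hq : 0 < q) (y : ℝ) {s t : ℤ} (hst : (q : ℤ) ∣ s - t) :
    nd (y - s / q) ≤ |q * y - t| / q := by
  obtain ⟨M, hM⟩ := hst
  have hq' : (0 : ℝ) < q := by exact_mod_cast hq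
  have hs : (s : ℝ) = t + q * M := by rw [← sub_eq_iff_eq_add']; exact_mod_cast hM
  calc nd (y - s / q) = nd (y - t / q + ((-M : ℤ) : ℝ)) := by
        congr 1; rw [hs]; field_simp; push_cast; ring
    _ ≤ |y - t / q| := by rw [nd_add_intCast]; simpa using nd_le_abs_sub_intCast (y - t / q) 0
    _ = |q * y - t| / q := by
        rw [← abs_of_pos hq', ← abs_div, abs_of_pos hq']; congr 1; field_simp

open goldenRatio in
lemma natCast_fib_le_goldenRatio_pow (n : ℕ) : (Nat.fib n : ℝ) ≤ φ ^ n := by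
  cases n with
  | zero => simp
  | succ n =>
    calc (Nat.fib (n + 1) : ℝ) ≤ φ * Nat.fib (n + 1) :=
          le_mul_of_one_le_left (Nat.cast_nonneg _) Real.one_lt_goldenRatio.le
      _ ≤ φ * Nat.fib (n + 1) + Nat.fib n := le_add_of_nonneg_right (Nat.cast_nonneg _)
      _ = φ ^ (n + 1) := Real.goldenRatio_mul_fib_succ_add_fib n

open goldenRatio in
lemma natCast_fib_mul_abs_fib_mul_goldenRatio_sub_le_one (n : ℕ) :
    (Nat.fib n : ℝ) * |Nat.fib n * φ - Nat.fib (n + 1)| ≤ 1 := by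
  have hψ : |(Nat.fib n : ℝ) * φ - Nat.fib (n + 1)| = |ψ| ^ n := by
    rw [← abs_pow, ← Real.fib_succ_sub_goldenRatio_mul_fib, abs_sub_comm, mul_comm]
  calc (Nat.fib n : ℝ) * |Nat.fib n * φ - Nat.fib (n + 1)| ≤ φ ^ n * |ψ| ^ n := by
        rw [hψ]; gcongr; exact natCast_fib_le_goldenRatio_pow n
    _ = 1 := by
        rw [← abs_of_pos Real.goldenRatio_pos, ← mul_pow, ← abs_mul,
          Real.goldenRatio_mul_goldenConj]
        simp

lemma exists_abs_add_mul_sub_floor_le (u θ : ℝ) :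
    ∃ e : ℤ, ∀ k : ℝ, 0 ≤ k → k * |θ| ≤ 1 → |u + k * θ - (⌊u⌋ + e)| ≤ 1 := by
  have hu₀ := Int.floor_le u
  have hu₁ := Int.lt_floor_add_one u
  rcases le_or_gt 0 θ with hθ | hθ
  · refine ⟨1, fun k hk hkθ => ?_⟩
    rw [abs_of_nonneg hθ] at hkθ
    rw [abs_le]; push_cast
    constructor <;> nlinarith
  · refine ⟨0, fun k hk hkθ => ?_⟩
    rw [abs_of_neg hθ] at hkθ
    rw [abs_le]; push_cast
    constructor <;> nlinarith

lemma bijOn_zmodVal_add_mul_add_one {p q : ℕ} [NeZero q] (hpq : p.Coprime q) (a : ℤ) :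
    Set.BijOn (fun k : ℕ => ((a + k * p : ℤ) : ZMod q).val + 1) (Set.Ico 0 q) (Set.Icc 1 q) := by
  set σ := fun k : ℕ => ((a + k * p : ℤ) : ZMod q).val + 1
  have hmaps : Set.MapsTo σ (Set.Ico 0 q) (Set.Icc 1 q) := fun k _ =>
    ⟨Nat.le_add_left 1 _, ZMod.val_lt _⟩
  have hinj : Set.InjOn σ (Set.Ico 0 q) := by
    intro k hk k' hk' h
    have hval := ZMod.val_injective q (Nat.add_right_cancel h)
    push_cast at hval
    have hkk' : (k : ZMod q) = k' :=
      ((ZMod.isUnit_iff_coprime p q).mpr hpq).mul_left_inj.mp (add_left_cancel hval)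
    rw [ZMod.natCast_eq_natCast_iff', Nat.mod_eq_of_lt hk.2, Nat.mod_eq_of_lt hk'.2] at hkk'
    exact hkk'
  refine ⟨hmaps, hinj, ?_⟩
  rw [← Finset.coe_Ico, ← Finset.coe_Icc] at hmaps ⊢
  rw [← Finset.coe_Ico] at hinj
  exact Finset.surjOn_of_injOn_of_card_le σ hmaps hinj (by simp)

theorem exists_bijOn_nd_mul_add_sub_div_le {β : ℝ} {p q : ℕ} (hq : 0 < q) (hpq : p.Coprime q)
    (hβ : q * |q * β - p| ≤ 1) (x : ℝ) :
    ∃ σ : ℕ → ℕ, Set.BijOn σ (Set.Ico 0 q) (Set.Icc 1 q) ∧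
      ∀ k < q, nd (β * (x + k) - σ k / q) ≤ 1 / q := by
  have : NeZero q := ⟨hq.ne'⟩
  set u := q * β * x
  set θ := q * β - p
  obtain ⟨e, he⟩ := exists_abs_add_mul_sub_floor_le u θ
  refine ⟨_, bijOn_zmodVal_add_mul_add_one hpq (⌊u⌋ + e - 1), fun k hk => ?_⟩
  set σk := ((⌊u⌋ + e - 1 + k * p : ℤ) : ZMod q).val + 1
  have hσk : (q : ℤ) ∣ σk - (⌊u⌋ + e + k * p) := by
    rw [← ZMod.intCast_eq_intCast_iff_dvd_sub]
    push_cast [σk, ZMod.natCast_val]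
    ring
  have hq' : (0 : ℝ) < q := by exact_mod_cast hq
  have hkθ : (k : ℝ) * |θ| ≤ 1 :=
    (mul_le_mul_of_nonneg_right (by exact_mod_cast hk.le) (abs_nonneg θ)).trans hβ
  calc nd (β * (x + k) - (σk : ℤ) / q)
      ≤ |q * (β * (x + k)) - ((⌊u⌋ + e + k * p : ℤ) : ℝ)| / q := nd_sub_div_le hq _ hσk
    _ = |u + k * θ - (⌊u⌋ + e)| / q := by congr 2; push_cast; ring
    _ ≤ 1 / q := by gcongr; exact he k (Nat.cast_nonneg k) hkθ

theorem stmt17_general (α : ℝ) (n : ℕ → ℝ) (c : ℝ)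
    (happrox : ∀ k : ℕ, 1 ≤ k → nd (α * n k - Int.fract (phi * k)) ≤ c / k)
    (i R : ℕ) (hR : F i ≤ R) :
    ∃ σ : ℕ → ℕ, Set.BijOn σ (Set.Ico 0 (F i)) (Set.Icc 1 (F i)) ∧
      ∀ k, k ≤ F i - 1 →
        nd (α * n (R + k) - (σ k : ℝ) / F i) ≤ (1 + c) / F i := by
  have hq : 0 < F i := Nat.fib_pos.mpr i.succ_pos
  have hc : 0 ≤ c := (nd_nonneg _).trans (by simpa using happrox 1 le_rfl)
  obtain ⟨σ, hσ, hclose⟩ := exists_bijOn_nd_mul_add_sub_div_le hq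
    (Nat.fib_coprime_fib_succ (i + 1)).symm
    (natCast_fib_mul_abs_fib_mul_goldenRatio_sub_le_one (i + 1)) (R : ℝ)
  refine ⟨σ, hσ, fun k hk => ?_⟩
  have hRk : (F i : ℝ) ≤ (R + k : ℕ) := by exact_mod_cast hR.trans (Nat.le_add_right R k)
  calc nd (α * n (R + k) - σ k / F i)
      ≤ nd (α * n (R + k) - Int.fract (phi * (R + k : ℕ)))
        + nd (Int.fract (phi * (R + k : ℕ)) - σ k / F i) := nd_sub_le _ _ _
    _ ≤ c / (R + k : ℕ) + 1 / F i := by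
        refine add_le_add (happrox _ (by omega)) ?_
        rw [nd_fract_sub, Nat.cast_add]
        exact hclose k (by omega)
    _ ≤ c / F i + 1 / F i := by gcongr
    _ = (1 + c) / F i := by ring

theorem stmt17 (α : ℝ) (n : ℕ → ℝ) (c : ℝ)
    (happrox : ∀ k : ℕ, 1 ≤ k → nd (α * n k - Int.fract (phi * k)) ≤ c / k)
    (i R : ℕ) (hi : 2 ≤ i) (hR : F i ≤ R) :
    ∃ σ : ℕ → ℕ, Set.BijOn σ (Set.Ico 0 (F i)) (Set.Icc 1 (F i)) ∧
      ∀ k, k ≤ F i - 1 →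
        nd (α * n (R + k) - (σ k : ℝ) / F i) ≤ (1 + c) / F i :=
  stmt17_general α n c happrox i R hR
end
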